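/- Let φ : G → Homeo(X) be an expansive continuous action with expansive constant c > 0 of a finitely generated group G, with finite symmetric generating set S, on a compact metric space (X,d). Let l be a positive integer such that for any x, y ∈ X with d(x,y) ≥ c/2 one has max_{g∈G, |g|≤l} d(gx, gy) ≥ c, and let α > 1 be a real number with α^l < 2. Define n(x,y) = min{n ∈ ℕ : ∃ g ∈ G, |g| ≤ n, d(gx, gy) ≥ c} for x ≠ y, n(x,y) = ∞ otherwise, and ρ(x,y) = α^{-n(x,y)} (with α^{-∞} = 0). Then ρ is upper semicontinuous: if d(x_k, x) → 0 and d(y_k, y) → 0 as k → ∞, then limsup_{k→∞} ρ(x_k, y_k) ≤ ρ(x, y); equivalently, liminf_{k→∞} n(x_k, y_k) ≥ n(x, y). -/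
import Mathlib


open Pointwise Filter Metric Set Topology TopologicalSpace

/-- The group of self-homeomorphisms of `X`, with `(f * g) x = f (g x)`. -/
instance homeoGroup {X : Type*} [TopologicalSpace X] : Group (X ≃ₜ X) where
  mul f g := g.trans f
  one := Homeomorph.refl X
  inv := Homeomorph.symm
  mul_assoc _ _ _ := rfl
  one_mul _ := Homeomorph.ext fun _ => rfl
  mul_one _ := Homeomorph.ext fun _ => rfl
  inv_mul_cancel f := Homeomorph.ext f.symm_apply_apply

/-- The word length of `g` with respect to the (symmetric) generating set `S`:
the least `n` such that `g` is a product of `n` elements of `S`. -/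
noncomputable def wordLength {G : Type*} [Group G] (S : Set G) (g : G) : ℕ :=
  sInf {n : ℕ | g ∈ S ^ n}

/-- The growth function `β(G,S;k) = #{g ∈ G : |g| ≤ k}`. -/
noncomputable def growthFn {G : Type*} [Group G] (S : Set G) (k : ℕ) : ℕ :=
  Set.ncard {g : G | wordLength S g ≤ k}

/-- `G` has subexponential growth w.r.t. `S`: `lim_k β(G,S;k)^{1/k} ≤ 1`. -/
def SubexpGrowth {G : Type*} [Group G] (S : Set G) : Prop :=
  Filter.limsup (fun k : ℕ => (growthFn S k : ℝ) ^ (1 / (k : ℝ))) Filter.atTop ≤ 1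

/-- A continuum (here: a compact connected metric space, via instances) is Suslinian if
every family of pairwise disjoint nondegenerate subcontinua is countable. -/
def Suslinian (X : Type*) [MetricSpace X] : Prop :=
  ∀ 𝒜 : Set (Set X), (∀ A ∈ 𝒜, IsCompact A ∧ IsConnected A ∧ A.Nontrivial) →
    𝒜.Pairwise Disjoint → 𝒜.Countable

/-- `n(x,y)`: the least `n` such that `d(gx,gy) ≥ c` for some `g` with `|g| ≤ n`
(`∞` if there is no such `n`, in particular when `x = y`). -/
noncomputable def nIdx {G X : Type*} [Group G] [MetricSpace X] (S : Set G)
    (φ : G →* (X ≃ₜ X)) (c : ℝ) (x y : X) : ℕ∞ :=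
  sInf ((↑) '' {n : ℕ | ∃ g : G, wordLength S g ≤ n ∧ c ≤ dist (φ g x) (φ g y)})

/-- `ρ(x,y) = α^{-n(x,y)}`, with `α^{-∞} = 0`. -/
noncomputable def rho {G X : Type*} [Group G] [MetricSpace X] (S : Set G)
    (φ : G →* (X ≃ₜ X)) (c α : ℝ) (x y : X) : ℝ :=
  if nIdx S φ c x y = ⊤ then 0 else α ^ (-((nIdx S φ c x y).toNat : ℤ))


section Aux

open Pointwise

variable {G : Type*} [Group G] {S : Set G}

lemma exists_mem_pow (hSsym : S⁻¹ = S) (hSgen : Subgroup.closure S = ⊤) (g : G) :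
    ∃ n : ℕ, g ∈ S ^ n := by
  have hg : g ∈ Subgroup.closure S := hSgen ▸ Subgroup.mem_top g
  induction hg using Subgroup.closure_induction with
  | mem a ha => exact ⟨1, by simpa using ha⟩
  | one => exact ⟨0, by simp⟩
  | mul a b _ _ iha ihb =>
    obtain ⟨m, hm⟩ := iha
    obtain ⟨n, hn⟩ := ihb
    exact ⟨m + n, pow_add S m n ▸ Set.mul_mem_mul hm hn⟩
  | inv a _ iha =>
    obtain ⟨m, hm⟩ := iha
    refine ⟨m, ?_⟩
    have h : a⁻¹ ∈ (S ^ m)⁻¹ := by simpa using hm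
    rwa [← inv_pow, hSsym] at h

lemma mem_pow_wordLength (hSsym : S⁻¹ = S) (hSgen : Subgroup.closure S = ⊤) (g : G) :
    g ∈ S ^ wordLength S g :=
  Nat.sInf_mem (exists_mem_pow hSsym hSgen g)

lemma pow_finite (hSfin : S.Finite) : ∀ n : ℕ, (S ^ n : Set G).Finite := by
  intro n
  induction n with
  | zero => simpa using Set.finite_singleton (1 : G)
  | succ m ih => rw [pow_succ]; exact ih.mul hSfin

lemma ball_finite (hSfin : S.Finite) (hSsym : S⁻¹ = S) (hSgen : Subgroup.closure S = ⊤)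
    (m : ℕ) : {g : G | wordLength S g ≤ m}.Finite := by
  have hsub : {g : G | wordLength S g ≤ m} ⊆ ⋃ n ∈ Finset.range (m + 1), (S ^ n : Set G) := by
    intro g hg
    simp only [Set.mem_iUnion, Finset.mem_range]
    exact ⟨wordLength S g, Nat.lt_succ_of_le hg, mem_pow_wordLength hSsym hSgen g⟩
  exact (Set.Finite.biUnion (Finset.range (m + 1)).finite_toSet
    (fun n _ => pow_finite hSfin n)).subset hsub

end Aux

section RhoAux

variable {G X : Type*} [Group G] [MetricSpace X] (S : Set G) (φ : G →* (X ≃ₜ X)) (c α : ℝ)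

lemma rho_nonneg (hα : 0 < α) (x y : X) : 0 ≤ rho S φ c α x y := by
  unfold rho
  split
  · exact le_refl 0
  · exact le_of_lt (zpow_pos hα _)

lemma rho_le_one (hα : 1 ≤ α) (x y : X) : rho S φ c α x y ≤ 1 := by
  unfold rho
  split
  · exact zero_le_one
  · calc α ^ (-(((nIdx S φ c x y).toNat : ℕ) : ℤ)) ≤ α ^ (0 : ℤ) :=
        zpow_le_zpow_right₀ hα (by simp)
    _ = 1 := zpow_zero α

lemma rho_le_of_le (hα : 1 ≤ α) {m : ℕ} {x y : X}
    (h : (m : ℕ∞) ≤ nIdx S φ c x y) (hα0 : 0 < α) :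
    rho S φ c α x y ≤ α ^ (-(m : ℤ)) := by
  unfold rho
  split
  · exact le_of_lt (zpow_pos hα0 _)
  · rename_i htop
    apply zpow_le_zpow_right₀ hα
    have hm : m ≤ (nIdx S φ c x y).toNat := by
      have := ENat.toNat_le_toNat h htop
      simpa using this
    simp only [neg_le_neg_iff]
    exact_mod_cast hm

end RhoAux

/-- Upper semicontinuity of `ρ`: if `x_k → x` and `y_k → y` then
`limsup_k ρ(x_k, y_k) ≤ ρ(x, y)`. -/
theorem rho_upper_semicontinuous
    {G : Type*} [Group G] (S : Set G) (hSfin : S.Finite) (hSsym : S⁻¹ = S)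
    (hSgen : Subgroup.closure S = ⊤)
    {X : Type*} [MetricSpace X] [CompactSpace X] (φ : G →* (X ≃ₜ X))
    (c : ℝ) (hc : 0 < c)
    (hexp : ∀ x y : X, x ≠ y → c < ⨆ g : G, dist (φ g x) (φ g y))
    (l : ℕ) (hl : 0 < l)
    (hlsep : ∀ x y : X, c / 2 ≤ dist x y →
      ∃ g : G, wordLength S g ≤ l ∧ c ≤ dist (φ g x) (φ g y))
    (α : ℝ) (hα : 1 < α) (hαl : α ^ l < 2)
    (xs ys : ℕ → X) (x y : X)
    (hx : Filter.Tendsto xs Filter.atTop (nhds x))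
    (hy : Filter.Tendsto ys Filter.atTop (nhds y)) :
    Filter.limsup (fun k => rho S φ c α (xs k) (ys k)) Filter.atTop ≤ rho S φ c α x y := by
  classical
  set f : ℕ → ℝ := fun k => rho S φ c α (xs k) (ys k) with hf
  have hα0 : (0:ℝ) < α := lt_trans zero_lt_one hα
  have hα1 : (1:ℝ) ≤ α := le_of_lt hα
  have key : ∀ m : ℕ,
      (∀ g : G, wordLength S g ≤ m → dist (φ g x) (φ g y) < c) →
      ∀ᶠ k in Filter.atTop, ((m + 1 : ℕ) : ℕ∞) ≤ nIdx S φ c (xs k) (ys k) := by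
    intro m hm
    have hfin := ball_finite hSfin hSsym hSgen (S := S) m
    have hev : ∀ᶠ k in Filter.atTop, ∀ g ∈ {g : G | wordLength S g ≤ m},
        dist (φ g (xs k)) (φ g (ys k)) < c := by
      rw [Filter.eventually_all_finite hfin]
      intro g hg
      have htend : Filter.Tendsto (fun k => dist (φ g (xs k)) (φ g (ys k)))
          Filter.atTop (nhds (dist (φ g x) (φ g y))) :=
        (((φ g).continuous.tendsto x).comp hx).dist (((φ g).continuous.tendsto y).comp hy)
      exact htend.eventually_lt_const (hm g hg)
    filter_upwards [hev] with k hk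
    apply le_sInf
    rintro b ⟨n, ⟨g, hgn, hgc⟩, rfl⟩
    by_contra hlt
    push_neg at hlt
    have hnm : n ≤ m := by
      have : (n : ℕ∞) < ((m + 1 : ℕ) : ℕ∞) := hlt
      exact_mod_cast Nat.lt_succ_iff.mp (by exact_mod_cast this)
    exact absurd hgc (not_le.mpr (hk g (le_trans hgn hnm)))
  have hcb : Filter.IsCoboundedUnder (· ≤ ·) Filter.atTop f :=
    Filter.isCoboundedUnder_le_of_le Filter.atTop (fun k => rho_nonneg S φ c α hα0 _ _)
  by_cases htop : nIdx S φ c x y = ⊤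
  · -- ρ(x,y) = 0 : show f → 0
    have hxy : rho S φ c α x y = 0 := by rw [rho, if_pos htop]
    rw [hxy]
    have hnot : ∀ m : ℕ, ∀ g : G, wordLength S g ≤ m → dist (φ g x) (φ g y) < c := by
      intro m g hg
      by_contra hge
      push_neg at hge
      have hmem : (m : ℕ∞) ∈ (↑) ''
          {n : ℕ | ∃ g : G, wordLength S g ≤ n ∧ c ≤ dist (φ g x) (φ g y)} :=
        ⟨m, ⟨g, hg, hge⟩, rfl⟩
      have hle : nIdx S φ c x y ≤ (m : ℕ∞) := sInf_le hmem
      rw [htop] at hle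
      exact absurd hle (by simp)
    have htendf : Filter.Tendsto f Filter.atTop (nhds 0) := by
      rw [tendsto_order]
      constructor
      · intro a ha
        exact Filter.Eventually.of_forall fun k =>
          lt_of_lt_of_le ha (rho_nonneg S φ c α hα0 _ _)
      · intro a ha
        obtain ⟨m, hm⟩ := exists_pow_lt_of_lt_one ha (inv_lt_one_of_one_lt₀ hα)
        have hαm : α ^ (-((m + 1 : ℕ) : ℤ)) < a := by
          calc α ^ (-((m + 1 : ℕ) : ℤ)) ≤ α ^ (-(m : ℤ)) :=
                zpow_le_zpow_right₀ hα1 (by simp)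
            _ = α⁻¹ ^ m := by rw [zpow_neg, ← inv_zpow, zpow_natCast]
            _ < a := hm
        filter_upwards [key m (hnot m)] with k hk
        exact lt_of_le_of_lt (rho_le_of_le S φ c α hα1 hk hα0) hαm
    exact le_of_eq (htendf.limsup_eq)
  · have hxy : rho S φ c α x y = α ^ (-(((nIdx S φ c x y).toNat : ℕ) : ℤ)) := by
      rw [rho, if_neg htop]
    set n0 := (nIdx S φ c x y).toNat with hn0
    rcases Nat.eq_zero_or_eq_succ_pred n0 with h0 | hsucc
    · rw [hxy, h0]
      simp only [Nat.cast_zero, neg_zero, zpow_zero]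
      exact Filter.limsup_le_of_le hcb
        (Filter.Eventually.of_forall fun k => rho_le_one S φ c α hα1 _ _)
    · set m := n0 - 1 with hm
      have hn0m : n0 = m + 1 := hsucc
      have hmlt : ∀ g : G, wordLength S g ≤ m → dist (φ g x) (φ g y) < c := by
        intro g hg
        by_contra hge
        push_neg at hge
        have hmem : (m : ℕ∞) ∈ (↑) ''
            {n : ℕ | ∃ g : G, wordLength S g ≤ n ∧ c ≤ dist (φ g x) (φ g y)} :=
          ⟨m, ⟨g, hg, hge⟩, rfl⟩
        have hle : nIdx S φ c x y ≤ (m : ℕ∞) := sInf_le hmem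
        have : n0 ≤ m := by
          have := ENat.toNat_le_toNat hle (by simp)
          simpa [hn0] using this
        omega
      apply Filter.limsup_le_of_le hcb
      filter_upwards [key m hmlt] with k hk
      rw [hxy, hn0m]
      exact rho_le_of_le S φ c α hα1 hk hα0
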